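/- arXiv:1201.5365 — 4 statements merged into one kernel-verified Lean document; each statement's English description precedes it below -/
import Mathlib

section
/- Let L = F[z]/(f^e) with f monic irreducible of degree d, and let A ∈ L^{n×n} have Smith normal form diag(1,…,1 (r₀ times), f,…,f (r₁ times), …, f^{e−1},…,f^{e−1} (r_{e−1} times), 0,…,0). Then the rank over F of the block matrix φ(A) ∈ F^{den×den} equals d·e·r₀ + d·(e−1)·r₁ + ⋯ + d·r_{e−1}, i.e. rank φ(A) = Σ_{i=0}^{e−1} d(e−i)·r_i. -/
/-!
`A ↦ φ(A)` is a ring hom, so `rank φ(A) = rank φ(UAV)`, and `φ` of the diagonal Smith form is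
block diagonal with blocks `φ(f^k) = f(C)^k`. In the power basis of `F[z]/(f^e)` the companion
matrix `C` is multiplication by the root, so `rank f(C)^k` is the dimension of
`(f^k)/(f^e) ≅ F[z]/(f^(e-k))`, namely `d(e-k)`. Finally, if `k_j` is the exponent of the `j`-th
diagonal entry, `Σ_j (e - k_j)` counts the pairs `(j, t)` with `1 ≤ t ≤ e` and
`j < r₀ + ⋯ + r_(t-1)`, which sums to `Σ_i (e-i) rᵢ`.
-/

open Polynomial Matrix

/-- The companion matrix of a monic polynomial `g`, of size `m`. -/
def companionMat {F : Type*} [Field F] (m : ℕ) (g : Polynomial F) :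
    Matrix (Fin m) (Fin m) F :=
  Matrix.of fun i j =>
    if j.val = m - 1 then -g.coeff i.val
    else if i.val = j.val + 1 then 1 else 0

/-- Entrywise extension of `φ : L → F^{m×m}` to `n×n` matrices. -/
def blockMap {F L : Type*} [Field F] [CommRing L] {n m : ℕ}
    (φ : L →+* Matrix (Fin m) (Fin m) F) (A : Matrix (Fin n) (Fin n) L) :
    Matrix (Fin n × Fin m) (Fin n × Fin m) F :=
  Matrix.of fun p q => φ (A p.1 q.1) p.2 q.2

/-- Cumulative sum of multiplicities: `cum r t = r 0 + ⋯ + r (t-1)`. -/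
def cum (r : ℕ → ℕ) (t : ℕ) : ℕ := ∑ i ∈ Finset.range t, r i

/-- The exponent of the `j`-th diagonal entry of the Smith form with
multiplicities `r 0, …, r (e-1)` (value `e` in the zero region). -/
def expOf (r : ℕ → ℕ) (e j : ℕ) : ℕ :=
  ((Finset.Icc 1 e).filter fun t => cum r t ≤ j).card

open Finset

theorem expOf_le (r : ℕ → ℕ) (e j : ℕ) : expOf r e j ≤ e := by
  simpa [expOf] using card_filter_le (Icc 1 e) fun t => cum r t ≤ j

theorem sub_expOf_eq_card (r : ℕ → ℕ) (e j : ℕ) :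
    e - expOf r e j = #{t ∈ Icc 1 e | j < cum r t} := by
  have hsplit := card_filter_add_card_filter_not (s := Icc 1 e) fun t => cum r t ≤ j
  simp only [Nat.card_Icc, not_le] at hsplit
  rw [expOf]
  omega

theorem sum_Icc_cum (r : ℕ → ℕ) (e : ℕ) :
    ∑ t ∈ Icc 1 e, cum r t = ∑ i ∈ range e, (e - i) * r i := by
  induction e with
  | zero => simp
  | succ e ih =>
    have hsucc : ∀ i ∈ range e, (e + 1 - i) * r i = (e - i) * r i + r i := fun i hi => by
      rw [Nat.sub_add_comm (mem_range.mp hi).le, add_one_mul]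
    rw [sum_Icc_succ_top (by omega), ih, sum_range_succ (fun i => (e + 1 - i) * r i),
      sum_congr rfl hsucc, sum_add_distrib, cum, sum_range_succ, Nat.add_sub_cancel_left, one_mul,
      add_assoc]

theorem sum_sub_expOf {r : ℕ → ℕ} {e n : ℕ} (hsum : cum r e ≤ n) :
    ∑ j ∈ range n, (e - expOf r e j) = ∑ i ∈ range e, (e - i) * r i := by
  have hcount : ∀ t ∈ Icc 1 e, #{j ∈ range n | j < cum r t} = cum r t := fun t ht => by
    have hle : cum r t ≤ n :=
      (sum_le_sum_of_subset (range_subset_range.mpr (mem_Icc.mp ht).2)).trans hsum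
    rw [show {j ∈ range n | j < cum r t} = range (cum r t) by ext; simp; omega, card_range]
  calc ∑ j ∈ range n, (e - expOf r e j)
      = ∑ j ∈ range n, #((Icc 1 e).bipartiteAbove (fun j t => j < cum r t) j) := by
        simp only [sub_expOf_eq_card, bipartiteAbove]
    _ = ∑ t ∈ Icc 1 e, #((range n).bipartiteBelow (fun j t => j < cum r t) t) :=
        sum_card_bipartiteAbove_eq_sum_card_bipartiteBelow _
    _ = ∑ t ∈ Icc 1 e, cum r t := sum_congr rfl hcount
    _ = ∑ i ∈ range e, (e - i) * r i := sum_Icc_cum r e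

theorem Submodule.finrank_pi_univ {K ι : Type*} [Field K] [Fintype ι] {M : ι → Type*}
    [∀ i, AddCommGroup (M i)] [∀ i, Module K (M i)] [∀ i, FiniteDimensional K (M i)]
    (p : ∀ i, Submodule K (M i)) :
    Module.finrank K (Submodule.pi Set.univ p) = ∑ i, Module.finrank K (p i) := by
  let e : Submodule.pi Set.univ p ≃ₗ[K] ∀ i, p i :=
    { toFun x i := ⟨x.1 i, x.2 i trivial⟩
      invFun y := ⟨fun i => y i, fun i _ => (y i).2⟩
      map_add' _ _ := rfl
      map_smul' _ _ := rfl }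
  rw [e.finrank_eq, Module.finrank_pi_fintype]

theorem LinearMap.range_piMap {R ι : Type*} [Semiring R] {M N : ι → Type*}
    [∀ i, AddCommMonoid (M i)] [∀ i, Module R (M i)] [∀ i, AddCommMonoid (N i)]
    [∀ i, Module R (N i)] (f : ∀ i, M i →ₗ[R] N i) :
    LinearMap.range (LinearMap.piMap f) = Submodule.pi Set.univ fun i => LinearMap.range (f i) :=
  SetLike.coe_injective (Set.range_piMap fun i => f i)

theorem Matrix.rank_comp_diagonal {K o m : Type*} [Field K] [Fintype o] [DecidableEq o]
    [Fintype m] (M : o → Matrix m m K) :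
    (comp o o m m K (diagonal M)).rank = ∑ i, (M i).rank := by
  let curry : (o × m → K) ≃ₗ[K] (o → m → K) :=
    { Equiv.curry o m K with
      map_add' _ _ := rfl
      map_smul' _ _ := rfl }
  have hconj : (comp o o m m K (diagonal M)).mulVecLin =
      curry.symm.toLinearMap ∘ₗ LinearMap.piMap (fun i => (M i).mulVecLin) ∘ₗ
        curry.toLinearMap := by
    refine LinearMap.ext fun x => funext fun ⟨i, k⟩ => ?_
    change (comp o o m m K (diagonal M) *ᵥ x) (i, k) = (M i *ᵥ fun l => x (i, l)) k
    simp only [mulVec, dotProduct, Fintype.sum_prod_type, comp_apply]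
    rw [Fintype.sum_eq_single i fun j hj => by simp [diagonal_apply_ne _ (Ne.symm hj)]]
    simp
  rw [rank, hconj, LinearMap.range_comp, LinearMap.range_comp, LinearEquiv.range,
    Submodule.map_top, LinearEquiv.finrank_map_eq, LinearMap.range_piMap,
    Submodule.finrank_pi_univ]
  rfl

section BlockMap

variable {F L : Type*} [Field F] [CommRing L] {n m : ℕ} (φ : L →+* Matrix (Fin m) (Fin m) F)

theorem blockMap_eq_compRingEquiv (A : Matrix (Fin n) (Fin n) L) :
    blockMap φ A = compRingEquiv (Fin n) (Fin m) F (φ.mapMatrix A) :=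
  rfl

theorem blockMap_diagonal (D : Fin n → L) :
    blockMap φ (diagonal D) = comp _ _ _ _ F (diagonal fun i => φ (D i)) := by
  rw [blockMap_eq_compRingEquiv, RingHom.mapMatrix_apply, diagonal_map (map_zero φ)]
  rfl

theorem rank_blockMap_mul_mul {U A V : Matrix (Fin n) (Fin n) L} (hU : IsUnit U)
    (hV : IsUnit V) : (blockMap φ (U * A * V)).rank = (blockMap φ A).rank := by
  have hdet : ∀ {W : Matrix (Fin n) (Fin n) L}, IsUnit W →
      IsUnit (compRingEquiv (Fin n) (Fin m) F (φ.mapMatrix W)).det := fun hW =>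
    (isUnit_iff_isUnit_det _).mp ((hW.map φ.mapMatrix).map _)
  rw [blockMap_eq_compRingEquiv, map_mul, map_mul, map_mul, map_mul,
    rank_mul_eq_left_of_isUnit_det _ _ (hdet hV), rank_mul_eq_right_of_isUnit_det _ _ (hdet hU),
    blockMap_eq_compRingEquiv]

end BlockMap

section Companion

variable {F : Type*} [Field F]

theorem companionMat_minpolyGen {S : Type*} [Ring S] [Algebra F S] (pb : PowerBasis F S) :
    companionMat pb.dim pb.minpolyGen = Algebra.leftMulMatrix pb.basis pb.gen := by
  rw [PowerBasis.leftMulMatrix]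
  ext i j
  have hj := j.isLt
  simp only [companionMat, of_apply,
    show (j : ℕ) + 1 = pb.dim ↔ (j : ℕ) = pb.dim - 1 by omega]

theorem rank_aeval_companionMat {g : F[X]} (hg : g.Monic) {m : ℕ} (hm : g.natDegree = m)
    (p : F[X]) :
    (aeval (companionMat m g) p).rank =
      Module.finrank F (LinearMap.range (Algebra.lmul F (AdjoinRoot g) (AdjoinRoot.mk g p))) := by
  set pb := AdjoinRoot.powerBasis' hg
  have hdim : pb.dim = m := hm
  have hmin : pb.minpolyGen = g := by
    rw [PowerBasis.minpolyGen_eq, AdjoinRoot.powerBasis'_gen,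
      AdjoinRoot.minpoly_root hg.ne_zero, hg.leadingCoeff, inv_one, C_1, mul_one]
  subst hdim
  rw [← congrArg (companionMat pb.dim) hmin, companionMat_minpolyGen, aeval_algHom_apply,
    AdjoinRoot.powerBasis'_gen, AdjoinRoot.aeval_eq, Algebra.leftMulMatrix_apply,
    rank_eq_finrank_range_toLin _ pb.basis pb.basis, toLin_toMatrix]

theorem finrank_range_lmul_mk_mul {a b : F[X]} (ha : a ≠ 0) (hb : b.Monic) :
    Module.finrank F (LinearMap.range
      (Algebra.lmul F (AdjoinRoot (a * b)) (AdjoinRoot.mk (a * b) a))) = b.natDegree := by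
  set ψ := Algebra.lmul F _ (AdjoinRoot.mk (a * b) a) ∘ₗ (AdjoinRoot.mkₐ (a * b)).toLinearMap
  have hrange : LinearMap.range ψ =
      LinearMap.range (Algebra.lmul F _ (AdjoinRoot.mk (a * b) a)) :=
    LinearMap.range_comp_of_range_eq_top _ (LinearMap.range_eq_top.mpr AdjoinRoot.mk_surjective)
  have hker : LinearMap.ker ψ = (Ideal.span {b}).restrictScalars F := by
    ext p
    simp [ψ, Ideal.mem_span_singleton, ← map_mul, AdjoinRoot.mk_eq_zero, mul_dvd_mul_iff_left ha]
  rw [← hrange, ← ψ.quotKerEquivRange.finrank_eq, hker,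
    (Submodule.Quotient.restrictScalarsEquiv F (Ideal.span {b})).finrank_eq]
  exact (AdjoinRoot.powerBasis' hb).finrank

theorem rank_aeval_companionMat_pow {f : F[X]} (hf : f.Monic) {e k m : ℕ} (hk : k ≤ e)
    (hm : (f ^ e).natDegree = m) :
    (aeval (companionMat m (f ^ e)) (f ^ k)).rank = (e - k) * f.natDegree := by
  obtain ⟨j, rfl⟩ := Nat.exists_eq_add_of_le hk
  rw [rank_aeval_companionMat (hf.pow _) hm, pow_add,
    finrank_range_lmul_mk_mul (pow_ne_zero _ hf.ne_zero) (hf.pow j), hf.natDegree_pow,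
    Nat.add_sub_cancel_left]

end Companion

theorem rank_blockMap_of_smithForm_general {F : Type*} [Field F] (f : Polynomial F)
    (hmonic : f.Monic) (d e n : ℕ) (hd : d = f.natDegree)
    (C : Matrix (Fin (d * e)) (Fin (d * e)) F)
    (hC : C = companionMat (d * e) (f ^ e))
    (φ : (Polynomial F ⧸ Ideal.span {f ^ e}) →+*
        Matrix (Fin (d * e)) (Fin (d * e)) F)
    (hφ : ∀ g : Polynomial F, φ (Ideal.Quotient.mk (Ideal.span {f ^ e}) g) =
        Polynomial.aeval C g)
    (A : Matrix (Fin n) (Fin n) (Polynomial F ⧸ Ideal.span {f ^ e}))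
    (r : ℕ → ℕ) (hsum : ∑ i ∈ Finset.range e, r i ≤ n)
    (U V : Matrix (Fin n) (Fin n) (Polynomial F ⧸ Ideal.span {f ^ e}))
    (hU : IsUnit U) (hV : IsUnit V)
    (hSmith : U * A * V = Matrix.diagonal fun j : Fin n =>
        (Ideal.Quotient.mk (Ideal.span {f ^ e}) f) ^ (expOf r e j.val)) :
    (blockMap φ A).rank = ∑ i ∈ Finset.range e, d * (e - i) * r i := by
  have hdeg : (f ^ e).natDegree = d * e := by rw [hmonic.natDegree_pow, hd, mul_comm]
  have hblock : ∀ j : Fin n, (φ (Ideal.Quotient.mk _ f ^ expOf r e j)).rank =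
      d * (e - expOf r e j) := fun j => by
    rw [← map_pow, hφ, hC, rank_aeval_companionMat_pow hmonic (expOf_le r e j) hdeg, hd,
      mul_comm]
  rw [← rank_blockMap_mul_mul φ hU hV, hSmith, blockMap_diagonal, rank_comp_diagonal,
    sum_congr rfl fun j _ => hblock j, Fin.sum_univ_eq_sum_range (fun j => d * (e - expOf r e j)),
    ← mul_sum, sum_sub_expOf hsum, mul_sum]
  simp_rw [mul_assoc]

/-- If `A ∈ L^{n×n}` has Smith form `diag(1 ×r₀, f ×r₁, …, f^{e-1} ×r_{e-1}, 0, …)`,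
then `rank φ(A) = Σ_{i<e} d(e-i) rᵢ` over `F`. -/
theorem rank_blockMap_of_smithForm {F : Type*} [Field F] (f : Polynomial F)
    (hf : Irreducible f) (hmonic : f.Monic) (d e n : ℕ) (hd : d = f.natDegree)
    (he : 1 ≤ e) (C : Matrix (Fin (d * e)) (Fin (d * e)) F)
    (hC : C = companionMat (d * e) (f ^ e))
    (φ : (Polynomial F ⧸ Ideal.span {f ^ e}) →+*
        Matrix (Fin (d * e)) (Fin (d * e)) F)
    (hφ : ∀ g : Polynomial F, φ (Ideal.Quotient.mk (Ideal.span {f ^ e}) g) =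
        Polynomial.aeval C g)
    (A : Matrix (Fin n) (Fin n) (Polynomial F ⧸ Ideal.span {f ^ e}))
    (r : ℕ → ℕ) (hsum : ∑ i ∈ Finset.range e, r i ≤ n)
    (U V : Matrix (Fin n) (Fin n) (Polynomial F ⧸ Ideal.span {f ^ e}))
    (hU : IsUnit U) (hV : IsUnit V)
    (hSmith : U * A * V = Matrix.diagonal fun j : Fin n =>
        (Ideal.Quotient.mk (Ideal.span {f ^ e}) f) ^ (expOf r e j.val)) :
    (blockMap φ A).rank = ∑ i ∈ Finset.range e, d * (e - i) * r i :=
  rank_blockMap_of_smithForm_general f hmonic d e n hd C hC φ hφ A r hsum U V hU hV hSmith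
end

section
/- Let L be a commutative local principal ideal ring with maximal ideal generated by p, and let S = diag(s₁,…,s_n) ∈ L^{n×n} where each s_i is p^{e_i} for some e_i ≥ 0 or zero. If A = USV with U, V invertible over L, then for each k, the ideal generated by all k×k minors of A equals the ideal generated by s₁·s₂⋯s_k. -/
open Matrix

/-- The ideal generated by all `k×k` minors of a square matrix. -/
def minorsIdeal {L : Type*} [CommRing L] {n : ℕ} (k : ℕ)
    (A : Matrix (Fin n) (Fin n) L) : Ideal L :=
  Ideal.span { x | ∃ σ τ : Fin k → Fin n, StrictMono σ ∧ StrictMono τ ∧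
    x = (A.submatrix σ τ).det }

/-!
By multilinearity of the determinant in the rows, every `k×k` minor of `B * A` is an
`L`-linear combination of `k×k` minors of `A` (with rows chosen arbitrarily, which can be
sorted at the cost of a sign); transposing gives the same for `A * B`. Hence the minors ideal
is invariant under multiplication by invertible matrices on either side, and `A = U S V` has
the minors ideal of `S = diag s`. A minor of `diag s` with different row and column selections
has a zero row, while the principal minor on `σ` is `∏ s (σ i)`, divisible by the leading one
`s₁ ⋯ s_k` because `i ≤ σ i` and the `sᵢ` form a divisibility chain.
-/

open Function

lemma Fin.val_le_val_of_strictMono {k n : ℕ} {σ : Fin k → Fin n} (hσ : StrictMono σ)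
    (i : Fin k) : (i : ℕ) ≤ σ i := by
  simpa using Finset.card_le_card_of_injOn σ (s := Finset.Iio i) (t := Finset.Iio (σ i))
    (fun j hj => by simpa using hσ (by simpa using hj)) hσ.injective.injOn

lemma Fin.strictMono_comp_sort {k n : ℕ} {r : Fin k → Fin n} (hr : Injective r) :
    StrictMono (r ∘ Tuple.sort r) :=
  (Tuple.monotone_sort r).strictMono_of_injective (hr.comp (Tuple.sort r).injective)

lemma Fin.exists_apply_notMem_range_of_strictMono {k n : ℕ} {σ τ : Fin k → Fin n}
    (hσ : StrictMono σ) (hτ : StrictMono τ) (hne : σ ≠ τ) : ∃ i, σ i ∉ Set.range τ := by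
  by_contra! h
  have hsub : Finset.univ.image σ ⊆ Finset.univ.image τ := by
    simpa [Finset.subset_iff] using h
  have hcard : (Finset.univ.image τ).card ≤ (Finset.univ.image σ).card := by
    rw [Finset.card_image_of_injective _ hσ.injective,
      Finset.card_image_of_injective _ hτ.injective]
  have hrange : Set.range σ = Set.range τ := by
    simpa [Set.image_univ] using congrArg (fun t : Finset (Fin n) => (t : Set (Fin n)))
      (Finset.eq_of_subset_of_card_le hsub hcard)
  exact hne ((hσ.range_inj hτ).1 hrange)

namespace Matrix

variable {R : Type*} [CommRing R]

theorem det_mul_eq_sum {m n : Type*} [Fintype m] [DecidableEq m] [Fintype n] [DecidableEq n]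
    (B : Matrix m n R) (C : Matrix n m R) :
    (B * C).det = ∑ r : m → n, (∏ i, B i (r i)) * (C.submatrix r id).det := by
  have hrows : B * C = fun i => ∑ l, B i l • C l := by
    ext i j; simp [mul_apply, Finset.sum_apply]
  rw [hrows]
  exact (detRowAlternating.toMultilinearMap.map_sum _).trans <| Finset.sum_congr rfl fun r _ =>
    detRowAlternating.map_smul_univ (fun i => B i (r i)) (fun i => C (r i))

end Matrix

section minorsIdeal

variable {L : Type*} [CommRing L] {n k : ℕ}

lemma det_submatrix_mem_minorsIdeal (A : Matrix (Fin n) (Fin n) L) (r : Fin k → Fin n)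
    {τ : Fin k → Fin n} (hτ : StrictMono τ) : (A.submatrix r τ).det ∈ minorsIdeal k A := by
  by_cases hr : Injective r
  · set e := Tuple.sort r
    have hsorted : (A.submatrix (r ∘ e) τ).det ∈ minorsIdeal k A :=
      Ideal.subset_span ⟨_, τ, Fin.strictMono_comp_sort hr, hτ, rfl⟩
    have hperm : A.submatrix r τ = (A.submatrix (r ∘ e) τ).submatrix e.symm id := by
      ext i j; simp
    rw [hperm, det_permute]
    exact Ideal.mul_mem_left _ _ hsorted
  · obtain ⟨a, b, hab, hne⟩ := not_injective_iff.1 hr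
    rw [det_zero_of_row_eq hne (by ext j; simp [hab])]
    exact zero_mem _

lemma minorsIdeal_transpose (A : Matrix (Fin n) (Fin n) L) :
    minorsIdeal k Aᵀ = minorsIdeal k A := by
  suffices ∀ A : Matrix (Fin n) (Fin n) L, minorsIdeal k Aᵀ ≤ minorsIdeal k A from
    le_antisymm (this A) (by simpa using this Aᵀ)
  intro A
  refine Ideal.span_le.2 ?_
  rintro _ ⟨σ, τ, hσ, hτ, rfl⟩
  rw [← transpose_submatrix, det_transpose]
  exact Ideal.subset_span ⟨τ, σ, hτ, hσ, rfl⟩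

lemma minorsIdeal_mul_left_le (B A : Matrix (Fin n) (Fin n) L) :
    minorsIdeal k (B * A) ≤ minorsIdeal k A := by
  refine Ideal.span_le.2 ?_
  rintro _ ⟨σ, τ, -, hτ, rfl⟩
  rw [submatrix_mul _ _ _ _ _ bijective_id, det_mul_eq_sum]
  refine Ideal.sum_mem _ fun r _ => Ideal.mul_mem_left _ _ ?_
  simpa using det_submatrix_mem_minorsIdeal A r hτ

lemma minorsIdeal_mul_right_le (A B : Matrix (Fin n) (Fin n) L) :
    minorsIdeal k (A * B) ≤ minorsIdeal k A := by
  rw [← minorsIdeal_transpose (A * B), transpose_mul, ← minorsIdeal_transpose A]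
  exact minorsIdeal_mul_left_le Bᵀ Aᵀ

lemma minorsIdeal_mul_mul_of_isUnit {U V : Matrix (Fin n) (Fin n) L} (hU : IsUnit U)
    (hV : IsUnit V) (S : Matrix (Fin n) (Fin n) L) :
    minorsIdeal k (U * S * V) = minorsIdeal k S := by
  obtain ⟨U, rfl⟩ := hU
  obtain ⟨V, rfl⟩ := hV
  have hle : ∀ B A C : Matrix (Fin n) (Fin n) L, minorsIdeal k (B * A * C) ≤ minorsIdeal k A :=
    fun B A C => (minorsIdeal_mul_right_le _ C).trans (minorsIdeal_mul_left_le B A)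
  refine le_antisymm (hle _ _ _) ?_
  simpa [mul_assoc] using hle ↑U⁻¹ (U * S * V) ↑V⁻¹

lemma prod_dvd_det_submatrix_diagonal {s : Fin n → L} (hs : ∀ i j, i ≤ j → s i ∣ s j)
    (hk : k ≤ n) {σ τ : Fin k → Fin n} (hσ : StrictMono σ) (hτ : StrictMono τ) :
    ∏ i : Fin k, s (Fin.castLE hk i) ∣ ((diagonal s).submatrix σ τ).det := by
  obtain rfl | hne := eq_or_ne σ τ
  · rw [submatrix_diagonal _ _ hσ.injective, det_diagonal]
    exact Finset.prod_dvd_prod_of_dvd _ _ fun i _ =>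
      hs _ _ (Fin.le_def.2 (Fin.val_le_val_of_strictMono hσ i))
  · obtain ⟨i, hi⟩ := Fin.exists_apply_notMem_range_of_strictMono hσ hτ hne
    have hzero : ∀ j, (diagonal s).submatrix σ τ i j = 0 := fun j =>
      diagonal_apply_ne s fun h => hi ⟨j, h.symm⟩
    rw [det_eq_zero_of_row_eq_zero i hzero]
    exact dvd_zero _

lemma minorsIdeal_diagonal {s : Fin n → L} (hs : ∀ i j, i ≤ j → s i ∣ s j) (hk : k ≤ n) :
    minorsIdeal k (diagonal s) = Ideal.span {∏ i : Fin k, s (Fin.castLE hk i)} := by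
  refine le_antisymm (Ideal.span_le.2 ?_) (Ideal.span_le.2 ?_)
  · rintro _ ⟨σ, τ, hσ, hτ, rfl⟩
    exact Ideal.mem_span_singleton.2 (prod_dvd_det_submatrix_diagonal hs hk hσ hτ)
  · have hleading : ((diagonal s).submatrix (Fin.castLE hk) (Fin.castLE hk)).det =
        ∏ i : Fin k, s (Fin.castLE hk i) := by
      rw [submatrix_diagonal _ _ (Fin.castLE_injective hk), det_diagonal]; rfl
    rw [Set.singleton_subset_iff, ← hleading]
    exact Ideal.subset_span ⟨_, _, Fin.strictMono_castLE hk, Fin.strictMono_castLE hk, rfl⟩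

end minorsIdeal

theorem minorsIdeal_eq_span_prod_general {L : Type*} [CommRing L]
    {n : ℕ} (s : Fin n → L)
    (hdvd : ∀ i j : Fin n, i ≤ j → s i ∣ s j)
    (U V A : Matrix (Fin n) (Fin n) L) (hU : IsUnit U) (hV : IsUnit V)
    (hA : A = U * Matrix.diagonal s * V) :
    ∀ k : ℕ, ∀ hk : k ≤ n,
      minorsIdeal k A = Ideal.span {∏ i : Fin k, s (Fin.castLE hk i)} := by
  intro k hk
  rw [hA, minorsIdeal_mul_mul_of_isUnit hU hV, minorsIdeal_diagonal hdvd hk]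

/-- Over a commutative local principal ideal ring with maximal ideal `(p)`,
if `A = U S V` with `U, V` invertible and `S = diag(s₁,…,sₙ)` with each `sᵢ`
a power of `p` or zero and `sᵢ ∣ sᵢ₊₁`, then for each `k` the ideal generated
by the `k×k` minors of `A` is generated by `s₁ ⋯ s_k`. -/
theorem minorsIdeal_eq_span_prod {L : Type*} [CommRing L] [IsLocalRing L]
    [IsPrincipalIdealRing L] (p : L)
    (hmax : IsLocalRing.maximalIdeal L = Ideal.span {p})
    {n : ℕ} (s : Fin n → L)
    (hpow : ∀ i, s i = 0 ∨ ∃ m : ℕ, s i = p ^ m)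
    (hdvd : ∀ i j : Fin n, i ≤ j → s i ∣ s j)
    (U V A : Matrix (Fin n) (Fin n) L) (hU : IsUnit U) (hV : IsUnit V)
    (hA : A = U * Matrix.diagonal s * V) :
    ∀ k : ℕ, ∀ hk : k ≤ n,
      minorsIdeal k A = Ideal.span {∏ i : Fin k, s (Fin.castLE hk i)} :=
  minorsIdeal_eq_span_prod_general s hdvd U V A hU hV hA
end

section
/- Let L = F[z]/(f^e) with f monic irreducible of degree d over the field F, and let A ∈ L^{n×n}. For 1 ≤ ℓ ≤ e let ρ_{ℓ−1} = rank_F φ_ℓ(A mod f^ℓ), where φ_ℓ is the companion-matrix embedding into F^{dℓn×dℓn}. Then the multiplicities r₀,…,r_{e−1} of 1, f, …, f^{e−1} in the Smith form of A satisfy the lower-triangular linear system: for each ℓ with 1 ≤ ℓ ≤ e, ρ_{ℓ−1} = Σ_{i=0}^{ℓ−1} d(ℓ−i) r_i. In particular, the r_i are uniquely determined by ρ₀,…,ρ_{e−1}. -/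
open Polynomial Matrix

/-- `Φ_g(A)`: apply `h ↦ h(C_g)` entrywise to a polynomial matrix `A`,
where `C_g` is the `m×m` companion matrix of `g`.  For `g = f^ℓ` and a
representative `A` of a matrix over `F[z]/(f^e)`, this is the companion
embedding `φ_ℓ(A mod f^ℓ)`. -/
noncomputable def Phi {F : Type*} [Field F] {n : ℕ} (m : ℕ) (g : Polynomial F)
    (A : Matrix (Fin n) (Fin n) (Polynomial F)) :
    Matrix (Fin n × Fin m) (Fin n × Fin m) F :=
  Matrix.of fun pq rs =>
    (Polynomial.aeval (companionMat m g) (A pq.1 rs.1)) pq.2 rs.2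

section Companion

variable {F : Type*} [Field F] {g : Polynomial F}

lemma root_pow_natDegree (hg : g.Monic) :
    AdjoinRoot.root g ^ g.natDegree =
      ∑ i ∈ Finset.range g.natDegree, (-g.coeff i) • AdjoinRoot.root g ^ i := by
  have h : aeval (AdjoinRoot.root g)
      (X ^ g.natDegree + ∑ i ∈ Finset.range g.natDegree, C (g.coeff i) * X ^ i) = 0 := by
    rw [← hg.as_sum, AdjoinRoot.aeval_eq]; exact AdjoinRoot.mk_self
  simp only [map_add, map_sum, map_pow, _root_.map_mul, aeval_X, aeval_C] at h
  have h2 : AdjoinRoot.root g ^ g.natDegree =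
      -∑ i ∈ Finset.range g.natDegree, algebraMap F _ (g.coeff i) * AdjoinRoot.root g ^ i := by
    linear_combination h
  rw [h2, ← Finset.sum_neg_distrib]
  refine Finset.sum_congr rfl fun i _ => ?_
  rw [Algebra.smul_def, map_neg, neg_mul]

lemma companionMat_eq (hg : g.Monic) (h0 : g.natDegree ≠ 0) :
    companionMat g.natDegree g =
      Algebra.leftMulMatrix (AdjoinRoot.powerBasis hg.ne_zero).basis (AdjoinRoot.root g) := by
  set pb := AdjoinRoot.powerBasis hg.ne_zero with hpb
  have hb : ∀ k : Fin g.natDegree, pb.basis k = AdjoinRoot.root g ^ (k : ℕ) := by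
    intro k
    simpa [hpb] using pb.basis_eq_pow k
  ext i j
  erw [Algebra.leftMulMatrix_eq_repr_mul, hb j, ← pow_succ']
  by_cases hj : (j : ℕ) = g.natDegree - 1
  · have hj1 : (j : ℕ) + 1 = g.natDegree := by omega
    rw [hj1, root_pow_natDegree hg]
    have hs : (∑ k ∈ Finset.range g.natDegree, (-g.coeff k) • AdjoinRoot.root g ^ k) =
        ∑ k : Fin g.natDegree, (fun t : Fin g.natDegree => -g.coeff (t : ℕ)) k • pb.basis k := by
      rw [← Fin.sum_univ_eq_sum_range fun k => (-g.coeff k) • AdjoinRoot.root g ^ k]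
      exact Finset.sum_congr rfl fun k _ => by rw [hb k]
    rw [hs, map_sum]
    have hrs : ∀ k : Fin g.natDegree,
        (AdjoinRoot.powerBasis hg.ne_zero).basis.repr (pb.basis k) = Finsupp.single k 1 :=
      fun k => pb.basis.repr_self k
    simp only [_root_.map_smul, hrs, Finsupp.smul_single, smul_eq_mul, mul_one,
      Finsupp.coe_finset_sum, Finset.sum_apply, Finsupp.single_apply]
    erw [Finset.sum_apply]
    rw [Finset.sum_eq_single i]
    · simp [companionMat, hj]
      erw [Finsupp.smul_apply, Finsupp.single_eq_same, smul_eq_mul, mul_one]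
    · intro k _ hk
      erw [Finsupp.smul_apply, Finsupp.single_eq_of_ne' hk, smul_zero]
    · simp
  · have hlt : (j : ℕ) + 1 < g.natDegree := by omega
    have hb' : AdjoinRoot.root g ^ ((j : ℕ) + 1) = pb.basis ⟨(j : ℕ) + 1, hlt⟩ := by
      exact (hb ⟨(j : ℕ) + 1, hlt⟩).symm
    erw [hb', Module.Basis.repr_self]
    simp only [companionMat, Matrix.of_apply, hj, if_false]
    by_cases hij : (i : ℕ) = (j : ℕ) + 1
    · have he : (⟨(j : ℕ) + 1, hlt⟩ : Fin g.natDegree) = i := by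
        apply Fin.ext; simp [hij]
      subst he
      erw [Finsupp.single_eq_same]; simp
    · have he : (⟨(j : ℕ) + 1, hlt⟩ : Fin g.natDegree) ≠ i := by
        intro h; apply hij
        have := congrArg Fin.val h; simp at this; omega
      erw [Finsupp.single_eq_of_ne' he]; simp [hij]

end Companion
section RankPhi

variable {F : Type*} [Field F] {n : ℕ} {g : Polynomial F}

lemma Phi_apply (hg : g.Monic) (h0 : g.natDegree ≠ 0)
    (A : Matrix (Fin n) (Fin n) (Polynomial F)) (i j : Fin n) (p q : Fin g.natDegree) :
    Phi g.natDegree g A (i, p) (j, q) =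
      Algebra.leftMulMatrix (AdjoinRoot.powerBasis hg.ne_zero).basis
        (AdjoinRoot.mk g (A i j)) p q := by
  have : Polynomial.aeval (companionMat g.natDegree g) (A i j) =
      Algebra.leftMulMatrix (AdjoinRoot.powerBasis hg.ne_zero).basis
        (AdjoinRoot.mk g (A i j)) := by
    rw [companionMat_eq hg h0, ← AdjoinRoot.aeval_eq]
    exact Polynomial.aeval_algHom_apply _ _ _
  rw [Phi, Matrix.of_apply, this]

lemma rank_Phi (hg : g.Monic) (h0 : g.natDegree ≠ 0)
    (A : Matrix (Fin n) (Fin n) (Polynomial F)) :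
    (Phi g.natDegree g A).rank =
      Module.finrank F (LinearMap.range
        (((A.map (AdjoinRoot.mk g)).mulVecLin).restrictScalars F)) := by
  classical
  set pb := AdjoinRoot.powerBasis hg.ne_zero with hpb
  set b : Module.Basis (Fin n × Fin g.natDegree) F (Fin n → AdjoinRoot g) :=
    (Pi.basis fun _ : Fin n => pb.basis).reindex (Equiv.sigmaEquivProd (Fin n) (Fin g.natDegree))
    with hb
  rw [Matrix.rank_eq_finrank_range_toLin (Phi g.natDegree g A) b b]
  have hPhi : Phi g.natDegree g A =
      LinearMap.toMatrix b b (((A.map (AdjoinRoot.mk g)).mulVecLin).restrictScalars F) := by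
    ext ⟨i, p⟩ ⟨j, q⟩
    rw [Phi_apply hg h0, LinearMap.toMatrix_apply]
    have hbjq : b (j, q) = Pi.single j (pb.basis q) := by
      erw [hb, Module.Basis.reindex_apply]
      simp [Pi.basis_apply, Equiv.sigmaEquivProd]
      rfl
    rw [hbjq]
    have happ : (((A.map (AdjoinRoot.mk g)).mulVecLin).restrictScalars F)
        (Pi.single j (pb.basis q)) = fun i' => (A.map (AdjoinRoot.mk g)) i' j * pb.basis q := by
      ext i'
      simp [Matrix.mulVec_single]
    rw [happ]
    have hrepr : b.repr (fun i' => (A.map (AdjoinRoot.mk g)) i' j * pb.basis q) (i, p) =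
        pb.basis.repr ((A.map (AdjoinRoot.mk g)) i j * pb.basis q) p := by
      erw [hb, Module.Basis.repr_reindex_apply]
    erw [hrepr, Algebra.leftMulMatrix_eq_repr_mul, Matrix.map_apply]
  rw [hPhi, Matrix.toLin_toMatrix]

end RankPhi
section Units

variable {F : Type*} [Field F] {n : ℕ} {S : Type*} [CommRing S] [Algebra F S]

private def unitEquiv (u : (Matrix (Fin n) (Fin n) S)ˣ) : (Fin n → S) ≃ₗ[F] (Fin n → S) :=
  LinearEquiv.ofLinear (((u : Matrix (Fin n) (Fin n) S).mulVecLin).restrictScalars F)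
    ((((u⁻¹ : _) : Matrix (Fin n) (Fin n) S).mulVecLin).restrictScalars F)
    (by
      apply LinearMap.ext; intro x
      show (u : Matrix (Fin n) (Fin n) S) *ᵥ (((u⁻¹ : _) : Matrix (Fin n) (Fin n) S) *ᵥ x) = x
      rw [Matrix.mulVec_mulVec, u.mul_inv, Matrix.one_mulVec])
    (by
      apply LinearMap.ext; intro x
      show ((u⁻¹ : _) : Matrix (Fin n) (Fin n) S) *ᵥ ((u : Matrix (Fin n) (Fin n) S) *ᵥ x) = x
      rw [Matrix.mulVec_mulVec, u.inv_mul, Matrix.one_mulVec])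

lemma finrank_range_unit_mul (U V B : Matrix (Fin n) (Fin n) S)
    (hU : IsUnit U) (hV : IsUnit V) :
    Module.finrank F (LinearMap.range (((U * B * V).mulVecLin).restrictScalars F)) =
      Module.finrank F (LinearMap.range ((B.mulVecLin).restrictScalars F)) := by
  obtain ⟨u, hu⟩ := hU
  obtain ⟨v, hv⟩ := hV
  let eU : (Fin n → S) ≃ₗ[F] (Fin n → S) := unitEquiv u
  let eV : (Fin n → S) ≃ₗ[F] (Fin n → S) := unitEquiv v
  have hcomp : ((U * B * V).mulVecLin).restrictScalars F =
      (eU : (Fin n → S) →ₗ[F] (Fin n → S)) ∘ₗ ((B.mulVecLin).restrictScalars F) ∘ₗ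
        (eV : (Fin n → S) →ₗ[F] (Fin n → S)) := by
    apply LinearMap.ext; intro x
    show (U * B * V) *ᵥ x = (u : Matrix (Fin n) (Fin n) S) *ᵥ (B *ᵥ ((v : _) *ᵥ x))
    rw [hu, hv, Matrix.mulVec_mulVec, Matrix.mulVec_mulVec, Matrix.mul_assoc]
  rw [hcomp]
  rw [LinearMap.range_comp, LinearMap.range_comp_of_range_eq_top _ (LinearEquiv.range eV)]
  exact LinearEquiv.finrank_map_eq eU _

end Units
section Diagonal

variable {F : Type*} [Field F] {n : ℕ} {S : Type*} [CommRing S] [Algebra F S]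

lemma finrank_submodule_pi [FiniteDimensional F S] {p : Fin n → Submodule F S} :
    Module.finrank F (Submodule.pi Set.univ p) = ∑ j, Module.finrank F (p j) := by
  classical
  let e : (Submodule.pi Set.univ p) ≃ₗ[F] (∀ j, p j) :=
    { toFun := fun x j => ⟨x.1 j, x.2 j (Set.mem_univ j)⟩
      map_add' := fun x y => rfl
      map_smul' := fun c x => rfl
      invFun := fun y => ⟨fun j => (y j : S), fun j _ => (y j).2⟩
      left_inv := fun x => rfl
      right_inv := fun y => rfl }
  rw [LinearEquiv.finrank_eq e, Module.finrank_pi_fintype]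

lemma finrank_range_diagonal [FiniteDimensional F S] (w : Fin n → S) :
    Module.finrank F (LinearMap.range (((Matrix.diagonal w).mulVecLin).restrictScalars F)) =
      ∑ j, Module.finrank F (LinearMap.range (LinearMap.mulLeft F (w j))) := by
  classical
  have hr : LinearMap.range (((Matrix.diagonal w).mulVecLin).restrictScalars F) =
      Submodule.pi Set.univ (fun j => LinearMap.range (LinearMap.mulLeft F (w j))) := by
    ext x
    constructor
    · rintro ⟨v, rfl⟩
      intro j _
      exact ⟨v j, by simp [Matrix.mulVec_diagonal]⟩
    · intro hx
      choose v hv using fun j => hx j (Set.mem_univ j)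
      refine ⟨v, ?_⟩
      ext j
      simp only [LinearMap.restrictScalars_apply, Matrix.mulVecLin_apply]
      rw [Matrix.mulVec_diagonal]
      exact hv j
  rw [hr, finrank_submodule_pi]

end Diagonal
section MulLeft

variable {F : Type*} [Field F]

/-- `AdjoinRoot.mk` as an `F`-linear map. -/
noncomputable def mkL (g : Polynomial F) : Polynomial F →ₗ[F] AdjoinRoot g where
  toFun := AdjoinRoot.mk g
  map_add' := fun x y => map_add _ x y
  map_smul' := fun c p => by
    simp only [RingHom.id_apply, Polynomial.smul_eq_C_mul, _root_.map_mul, Algebra.smul_def,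
      AdjoinRoot.algebraMap_eq, AdjoinRoot.of]
    rfl

lemma finrank_range_mulLeft (f : Polynomial F) (hmonic : f.Monic)
    (d k ℓ : ℕ) (hd : d = f.natDegree) :
    Module.finrank F (LinearMap.range (LinearMap.mulLeft F (AdjoinRoot.mk (f ^ ℓ) (f ^ k)))) =
      d * (ℓ - k) := by
  classical
  by_cases hkl : ℓ ≤ k
  · have h0 : AdjoinRoot.mk (f ^ ℓ) (f ^ k) = 0 := by
      rw [AdjoinRoot.mk_eq_zero]
      exact pow_dvd_pow f hkl
    rw [h0, LinearMap.mulLeft_zero_eq_zero, LinearMap.range_zero, finrank_bot,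
      Nat.sub_eq_zero_of_le hkl, mul_zero]
  · push_neg at hkl
    set g : Polynomial F := f ^ ℓ with hg
    set s : ℕ := ℓ - k with hs
    set M : ℕ := d * s with hM
    have hfne : f ≠ 0 := hmonic.ne_zero
    have hgs : (f ^ s).Monic := hmonic.pow s
    have hdeg_fs : (f ^ s).degree = (M : WithBot ℕ) := by
      rw [Polynomial.degree_eq_natDegree (hgs.ne_zero), Polynomial.natDegree_pow, ← hd,
        mul_comm]
    have hks : f ^ k * f ^ s = g := by
      rw [← pow_add, hg]
      congr 1
      omega
    set c : AdjoinRoot g := AdjoinRoot.mk g (f ^ k) with hc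
    set T : Polynomial.degreeLT F M →ₗ[F] AdjoinRoot g :=
      (LinearMap.mulLeft F c) ∘ₗ (mkL g) ∘ₗ (Submodule.subtype _) with hT
    have hTapp : ∀ x : Polynomial.degreeLT F M, T x = AdjoinRoot.mk g (f ^ k * (x : Polynomial F)) := by
      intro x
      simp only [hT, LinearMap.comp_apply, Submodule.coe_subtype, LinearMap.mulLeft_apply, hc]
      exact (_root_.map_mul (AdjoinRoot.mk g) (f ^ k) (x : Polynomial F)).symm
    have hinj : Function.Injective T := by
      rw [← LinearMap.ker_eq_bot]
      apply (Submodule.eq_bot_iff _).2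
      rintro ⟨r, hr⟩ hx
      rw [LinearMap.mem_ker, hTapp] at hx
      rw [AdjoinRoot.mk_eq_zero, ← hks] at hx
      have hdvd : f ^ s ∣ r := (mul_dvd_mul_iff_left (pow_ne_zero k hfne)).1 hx
      have hr0 : r = 0 := by
        apply Polynomial.eq_zero_of_dvd_of_degree_lt hdvd
        rw [hdeg_fs]
        exact Polynomial.mem_degreeLT.1 hr
      simp [hr0]
    have hrange : LinearMap.range T = LinearMap.range (LinearMap.mulLeft F c) := by
      apply le_antisymm
      · rintro _ ⟨x, rfl⟩
        exact ⟨mkL g x, rfl⟩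
      · rintro _ ⟨y, rfl⟩
        obtain ⟨p, rfl⟩ := AdjoinRoot.mk_surjective (g := g) y
        have hmem : p %ₘ (f ^ s) ∈ Polynomial.degreeLT F M := by
          rw [Polynomial.mem_degreeLT, ← hdeg_fs]
          exact Polynomial.degree_modByMonic_lt p hgs
        refine ⟨⟨p %ₘ (f ^ s), hmem⟩, ?_⟩
        rw [hTapp]
        have hp : p = p %ₘ (f ^ s) + (f ^ s) * (p /ₘ (f ^ s)) :=
          (Polynomial.modByMonic_add_div p (f ^ s)).symm
        rw [LinearMap.mulLeft_apply, hc, ← _root_.map_mul]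
        conv_rhs => rw [hp]
        rw [mul_add, _root_.map_add, ← mul_assoc, hks]
        have : AdjoinRoot.mk g (g * (p /ₘ (f ^ s))) = 0 := by
          rw [AdjoinRoot.mk_eq_zero]
          exact dvd_mul_right _ _
        rw [this, add_zero]
    have hM' : Module.finrank F (Polynomial.degreeLT F M) = M := by
      rw [LinearEquiv.finrank_eq (Polynomial.degreeLTEquiv F M)]
      exact Module.finrank_fin_fun F
    rw [← hrange, LinearMap.finrank_range_of_inj hinj, hM']

end MulLeft
section Comb

lemma cum_mono (r : ℕ → ℕ) : Monotone (cum r) := by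
  intro a b hab
  exact Finset.sum_le_sum_of_subset (Finset.range_subset_range.2 hab)

lemma cum_le_iff (r : ℕ → ℕ) {e s j : ℕ} (hs1 : 1 ≤ s) (hse : s ≤ e) :
    cum r s ≤ j ↔ s ≤ expOf r e j := by
  constructor
  · intro h
    have hsub : Finset.Icc 1 s ⊆ (Finset.Icc 1 e).filter fun t => cum r t ≤ j := by
      intro t ht
      rw [Finset.mem_Icc] at ht
      rw [Finset.mem_filter, Finset.mem_Icc]
      exact ⟨⟨ht.1, ht.2.trans hse⟩, le_trans (cum_mono r ht.2) h⟩
    calc s = (Finset.Icc 1 s).card := by rw [Nat.card_Icc]; omega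
    _ ≤ _ := Finset.card_le_card hsub
  · intro h
    by_contra hc
    push_neg at hc
    have hsub : ((Finset.Icc 1 e).filter fun t => cum r t ≤ j) ⊆ Finset.Icc 1 (s - 1) := by
      intro t ht
      rw [Finset.mem_filter, Finset.mem_Icc] at ht
      rw [Finset.mem_Icc]
      refine ⟨ht.1.1, ?_⟩
      by_contra hts
      push_neg at hts
      have hst : s ≤ t := by omega
      exact absurd (le_trans (cum_mono r hst) ht.2) (by omega)
    have hcard := Finset.card_le_card hsub
    rw [Nat.card_Icc] at hcard
    unfold expOf at h
    omega

lemma comb_sum (r : ℕ → ℕ) (d e ℓ n : ℕ) (hℓe : ℓ ≤ e) (hn : cum r e ≤ n) :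
    ∑ j ∈ Finset.range n, d * (ℓ - expOf r e j) =
      ∑ i ∈ Finset.range ℓ, d * (ℓ - i) * r i := by
  classical
  have key : ∀ j, ℓ - expOf r e j = ((Finset.Icc 1 ℓ).filter fun s => j < cum r s).card := by
    intro j
    have hsplit := Finset.card_filter_add_card_filter_not
      (s := Finset.Icc 1 ℓ) (p := fun s => j < cum r s)
    have hcard : ((Finset.Icc 1 ℓ).filter fun s => ¬ j < cum r s).card
        = min ℓ (expOf r e j) := by
      have heq : ((Finset.Icc 1 ℓ).filter fun s => ¬ j < cum r s)
          = Finset.Icc 1 (min ℓ (expOf r e j)) := by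
        ext t
        rw [Finset.mem_filter, Finset.mem_Icc, Finset.mem_Icc, not_lt]
        constructor
        · rintro ⟨⟨h1, h2⟩, h3⟩
          exact ⟨h1, le_min h2 ((cum_le_iff r h1 (h2.trans hℓe)).1 h3)⟩
        · rintro ⟨h1, h2⟩
          rw [le_min_iff] at h2
          exact ⟨⟨h1, h2.1⟩, (cum_le_iff r h1 (h2.1.trans hℓe)).2 h2.2⟩
      rw [heq, Nat.card_Icc]
      omega
    rw [hcard, Nat.card_Icc] at hsplit
    omega
  calc ∑ j ∈ Finset.range n, d * (ℓ - expOf r e j)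
      = ∑ j ∈ Finset.range n, ∑ s ∈ Finset.Icc 1 ℓ, (if j < cum r s then d else 0) := by
        refine Finset.sum_congr rfl fun j _ => ?_
        rw [key j, Finset.card_filter, Finset.mul_sum]
        refine Finset.sum_congr rfl fun s _ => ?_
        split <;> simp
    _ = ∑ s ∈ Finset.Icc 1 ℓ, ∑ j ∈ Finset.range n, (if j < cum r s then d else 0) :=
        Finset.sum_comm
    _ = ∑ s ∈ Finset.Icc 1 ℓ, d * cum r s := by
        refine Finset.sum_congr rfl fun s hs => ?_
        rw [Finset.mem_Icc] at hs
        have hcs : cum r s ≤ n := le_trans (cum_mono r (hs.2.trans hℓe)) hn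
        have hfil : (Finset.range n).filter (fun j => j < cum r s)
            = Finset.range (cum r s) := by
          ext j
          simp only [Finset.mem_filter, Finset.mem_range]
          exact ⟨fun h => h.2, fun h => ⟨lt_of_lt_of_le h hcs, h⟩⟩
        rw [← Finset.sum_filter, hfil, Finset.sum_const, Finset.card_range, smul_eq_mul, mul_comm]
    _ = ∑ s ∈ Finset.Icc 1 ℓ, ∑ i ∈ Finset.range ℓ, (if i < s then d * r i else 0) := by
        refine Finset.sum_congr rfl fun s hs => ?_
        rw [Finset.mem_Icc] at hs
        have hfil : (Finset.range ℓ).filter (fun i => i < s) = Finset.range s := by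
          ext i
          simp only [Finset.mem_filter, Finset.mem_range]
          exact ⟨fun h => h.2, fun h => ⟨lt_of_lt_of_le h hs.2, h⟩⟩
        rw [← Finset.sum_filter, hfil, cum, Finset.mul_sum]
    _ = ∑ i ∈ Finset.range ℓ, ∑ s ∈ Finset.Icc 1 ℓ, (if i < s then d * r i else 0) :=
        Finset.sum_comm
    _ = ∑ i ∈ Finset.range ℓ, d * (ℓ - i) * r i := by
        refine Finset.sum_congr rfl fun i hi => ?_
        rw [Finset.mem_range] at hi
        have hfil : (Finset.Icc 1 ℓ).filter (fun s => i < s) = Finset.Icc (i + 1) ℓ := by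
          ext s
          simp only [Finset.mem_filter, Finset.mem_Icc]
          omega
        rw [← Finset.sum_filter, hfil, Finset.sum_const, Nat.card_Icc, smul_eq_mul]
        have : ℓ + 1 - (i + 1) = ℓ - i := by omega
        rw [this]
        ring

end Comb
section Main

variable {F : Type*} [Field F]

lemma rank_Phi' {n : ℕ} {g : Polynomial F} (hg : g.Monic) (h0 : g.natDegree ≠ 0)
    (m : ℕ) (hm : m = g.natDegree) (A : Matrix (Fin n) (Fin n) (Polynomial F)) :
    (Phi m g A).rank =
      Module.finrank F (LinearMap.range
        (((A.map (AdjoinRoot.mk g)).mulVecLin).restrictScalars F)) := by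
  subst hm
  exact rank_Phi hg h0 A

theorem rank_system_determines_multiplicities'
    (f : Polynomial F) (hf : Irreducible f) (hmonic : f.Monic)
    (d e n : ℕ) (hd : d = f.natDegree) (he : 1 ≤ e)
    (A : Matrix (Fin n) (Fin n) (Polynomial F))
    (r : ℕ → ℕ) (hsum : ∑ i ∈ Finset.range e, r i ≤ n)
    (U V : Matrix (Fin n) (Fin n) (Polynomial F ⧸ Ideal.span {f ^ e}))
    (hU : IsUnit U) (hV : IsUnit V)
    (hSmith : U * A.map (Ideal.Quotient.mk (Ideal.span {f ^ e})) * V =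
      Matrix.diagonal fun j : Fin n =>
        (Ideal.Quotient.mk (Ideal.span {f ^ e}) f) ^ (expOf r e j.val)) :
    (∀ ℓ : ℕ, 1 ≤ ℓ → ℓ ≤ e →
        (Phi (d * ℓ) (f ^ ℓ) A).rank = ∑ i ∈ Finset.range ℓ, d * (ℓ - i) * r i) ∧
    (∀ r' r'' : ℕ → ℕ,
        (∀ ℓ : ℕ, 1 ≤ ℓ → ℓ ≤ e →
          ∑ i ∈ Finset.range ℓ, d * (ℓ - i) * r' i =
          ∑ i ∈ Finset.range ℓ, d * (ℓ - i) * r'' i) →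
        ∀ i < e, r' i = r'' i) := by
  have hd0 : 0 < d := hd ▸ hf.natDegree_pos
  constructor
  · intro ℓ hℓ1 hℓe
    set g : Polynomial F := f ^ ℓ with hg
    have hgmon : g.Monic := hmonic.pow ℓ
    have h0 : g.natDegree ≠ 0 := by
      rw [hg, Polynomial.natDegree_pow]
      have : f.natDegree ≠ 0 := by omega
      positivity
    have hm : d * ℓ = g.natDegree := by
      rw [hg, Polynomial.natDegree_pow, hd, mul_comm]
    rw [rank_Phi' hgmon h0 (d * ℓ) hm A]
    haveI : Module.Finite F (AdjoinRoot g) := (AdjoinRoot.powerBasis hgmon.ne_zero).finite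
    have hle : Ideal.span {f ^ e} ≤ Ideal.span ({f ^ ℓ} : Set (Polynomial F)) :=
      Ideal.span_singleton_le_span_singleton.2 (pow_dvd_pow f hℓe)
    set σ : (Polynomial F ⧸ Ideal.span {f ^ e}) →+* AdjoinRoot g :=
      Ideal.Quotient.factor hle with hσ
    have hσmk : ∀ p : Polynomial F,
        σ (Ideal.Quotient.mk (Ideal.span {f ^ e}) p) = AdjoinRoot.mk g p := fun p =>
      Ideal.Quotient.factor_mk hle p
    have hA' : σ.mapMatrix (A.map (Ideal.Quotient.mk (Ideal.span {f ^ e})))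
        = A.map (AdjoinRoot.mk g) := by
      ext i j
      simp only [RingHom.mapMatrix_apply, Matrix.map_apply]
      exact hσmk (A i j)
    have h2 := congrArg (σ.mapMatrix) hSmith
    rw [_root_.map_mul, _root_.map_mul, hA'] at h2
    have hdiag : σ.mapMatrix (Matrix.diagonal fun j : Fin n =>
          (Ideal.Quotient.mk (Ideal.span {f ^ e}) f) ^ (expOf r e j.val))
        = Matrix.diagonal fun j : Fin n => AdjoinRoot.mk g (f ^ (expOf r e j.val)) := by
      rw [RingHom.mapMatrix_apply, Matrix.diagonal_map (map_zero σ)]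
      exact congrArg Matrix.diagonal (funext fun j => by rw [map_pow, hσmk, ← map_pow])
    rw [hdiag] at h2
    have hrk : Module.finrank F (LinearMap.range
          (((A.map (AdjoinRoot.mk g)).mulVecLin).restrictScalars F))
        = Module.finrank F (LinearMap.range
          (((Matrix.diagonal fun j : Fin n =>
            AdjoinRoot.mk g (f ^ (expOf r e j.val))).mulVecLin).restrictScalars F)) := by
      rw [← h2]
      exact (finrank_range_unit_mul _ _ _ (hU.map σ.mapMatrix) (hV.map σ.mapMatrix)).symm
    rw [hrk, finrank_range_diagonal]
    have hterm : ∀ j : Fin n, Module.finrank F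
        (LinearMap.range (LinearMap.mulLeft F (AdjoinRoot.mk g (f ^ (expOf r e j.val)))))
        = d * (ℓ - expOf r e j.val) := fun j =>
      finrank_range_mulLeft f hmonic d (expOf r e j.val) ℓ hd
    rw [Finset.sum_congr rfl fun j _ => hterm j]
    rw [Fin.sum_univ_eq_sum_range fun j => d * (ℓ - expOf r e j)]
    exact comb_sum r d e ℓ n hℓe hsum
  · intro r' r'' hr i hie
    induction i using Nat.strong_induction_on with
    | _ i ih =>
      have h1 := hr (i + 1) (by omega) (by omega)
      rw [Finset.sum_range_succ, Finset.sum_range_succ] at h1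
      have hsame : ∑ k ∈ Finset.range i, d * (i + 1 - k) * r' k
          = ∑ k ∈ Finset.range i, d * (i + 1 - k) * r'' k := by
        refine Finset.sum_congr rfl fun k hk => ?_
        rw [Finset.mem_range] at hk
        rw [ih k hk (by omega)]
      rw [hsame] at h1
      have h2 : d * (i + 1 - i) * r' i = d * (i + 1 - i) * r'' i := by omega
      have h3 : i + 1 - i = 1 := by omega
      rw [h3, mul_one] at h2
      exact Nat.eq_of_mul_eq_mul_left hd0 h2

end Main

/-- If `A` (a representative of a matrix over `L = F[z]/(f^e)`) has Smith form
with multiplicities `r₀,…,r_{e-1}` of `1, f, …, f^{e-1}`, then for each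
`1 ≤ ℓ ≤ e` the rank `ρ_{ℓ-1} = rank_F φ_ℓ(A mod f^ℓ)` satisfies
`ρ_{ℓ-1} = Σ_{i<ℓ} d(ℓ-i) rᵢ`; moreover this triangular system determines the
`rᵢ` uniquely from `ρ₀,…,ρ_{e-1}`. -/
theorem rank_system_determines_multiplicities {F : Type*} [Field F]
    (f : Polynomial F) (hf : Irreducible f) (hmonic : f.Monic)
    (d e n : ℕ) (hd : d = f.natDegree) (he : 1 ≤ e)
    (A : Matrix (Fin n) (Fin n) (Polynomial F))
    (r : ℕ → ℕ) (hsum : ∑ i ∈ Finset.range e, r i ≤ n)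
    (U V : Matrix (Fin n) (Fin n) (Polynomial F ⧸ Ideal.span {f ^ e}))
    (hU : IsUnit U) (hV : IsUnit V)
    (hSmith : U * A.map (Ideal.Quotient.mk (Ideal.span {f ^ e})) * V =
      Matrix.diagonal fun j : Fin n =>
        (Ideal.Quotient.mk (Ideal.span {f ^ e}) f) ^ (expOf r e j.val)) :
    (∀ ℓ : ℕ, 1 ≤ ℓ → ℓ ≤ e →
        (Phi (d * ℓ) (f ^ ℓ) A).rank = ∑ i ∈ Finset.range ℓ, d * (ℓ - i) * r i) ∧
    (∀ r' r'' : ℕ → ℕ,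
        (∀ ℓ : ℕ, 1 ≤ ℓ → ℓ ≤ e →
          ∑ i ∈ Finset.range ℓ, d * (ℓ - i) * r' i =
          ∑ i ∈ Finset.range ℓ, d * (ℓ - i) * r'' i) →
        ∀ i < e, r' i = r'' i) :=
  rank_system_determines_multiplicities' f hf hmonic d e n hd he A r hsum U V hU hV hSmith
end

section
/- Let F be a field, f ∈ F[z] monic irreducible of degree d, e ≥ 1, and let C = C_{f^e} be the de×de companion matrix of f^e. Then f(C) is similar over F to the nilpotent block matrix N with e×e blocks of size d: N has identity blocks I_d on the first superdiagonal (block positions (i,i+1)) and zero blocks elsewhere. In particular f(C)^e = 0 and the minimal polynomial of f(C) is x^e. -/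
open Polynomial Matrix

/-- The block-nilpotent matrix `N` of size `de×de` with `d×d` identity blocks
on the first block superdiagonal: entry `(a,b)` is `1` iff `b = a + d`. -/
def blockNilpotent (F : Type*) [Field F] (d e : ℕ) :
    Matrix (Fin (d * e)) (Fin (d * e)) F :=
  Matrix.of fun a b => if b.val = a.val + d then 1 else 0

/-!
Let `A = F[X]/(f^e)` and let `y ∈ A` be the class of `f`. The companion matrix of `f^e` is the
matrix of multiplication by the root `x` in the basis `1, x, …, x^(de-1)`, so `f(C)` is the matrix
of multiplication by `y`, and it suffices to find a basis of `A` in which multiplication by `y`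
has matrix `N`. The classes of `X^r f^q` (`r < d`, `q < e`), listed by degree `i = qd + r`, form a
basis because their degrees are exactly `0, …, de-1`, and multiplication by `y` sends the `i`-th
one to the `(i+d)`-th, or to `0` when `i + d ≥ de`; in the reversed order this is `N`.
Since `y^k = 0` iff `f^e ∣ f^k` iff `e ≤ k`, the minimal polynomial of `y`, hence of `f(C)`,
is `X^e`.
-/

theorem minpoly_eq_X_pow_of_pow_eq_zero_iff {F A : Type*} [Field F] [Ring A] [Algebra F A]
    {x : A} {e : ℕ} (h : ∀ k, x ^ k = 0 ↔ e ≤ k) : minpoly F x = X ^ e := by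
  have hxe : aeval x (X ^ e : F[X]) = 0 := by simp [(h e).2 le_rfl]
  obtain ⟨k, hke, hassoc⟩ := (dvd_prime_pow prime_X e).1 (minpoly.dvd F x hxe)
  have hmin : minpoly F x = X ^ k :=
    eq_of_monic_of_associated (minpoly.monic ⟨_, monic_X_pow e, hxe⟩) (monic_X_pow k) hassoc
  have hek : e ≤ k := (h k).1 (by simpa [hmin] using minpoly.aeval F x)
  rw [hmin, le_antisymm hke hek]

theorem AdjoinRoot.mk_pow_pow_eq_zero_iff {F : Type*} [Field F] {f : F[X]} (hf : Irreducible f)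
    (e k : ℕ) : mk (f ^ e) f ^ k = 0 ↔ e ≤ k := by
  rw [← map_pow, mk_eq_zero, pow_dvd_pow_iff hf.ne_zero hf.not_isUnit]

theorem companionMat_eq_leftMulMatrix {F : Type*} [Field F] {g : F[X]} (hg : g.Monic) {n : ℕ}
    (hn : g.natDegree = n) :
    companionMat n g = Algebra.leftMulMatrix
      ((AdjoinRoot.powerBasis' hg).basis.reindex (finCongr hn)) (AdjoinRoot.root g) := by
  have hmin : (AdjoinRoot.powerBasis' hg).minpolyGen = g := by
    rw [PowerBasis.minpolyGen_eq, AdjoinRoot.powerBasis'_gen, AdjoinRoot.minpoly_root hg.ne_zero,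
      hg.leadingCoeff, inv_one, map_one, mul_one]
  ext i j
  rw [Algebra.leftMulMatrix_eq_repr_mul, Module.Basis.reindex_apply,
    Module.Basis.repr_reindex_apply, ← AdjoinRoot.powerBasis'_gen hg,
    ← Algebra.leftMulMatrix_eq_repr_mul, PowerBasis.leftMulMatrix, hmin]
  -- `finCongr hn` only recasts indices, so the entries can be read off at `i j : Fin n`
  change _ = if (j : ℕ) + 1 = g.natDegree then -g.coeff i else if (i : ℕ) = j + 1 then 1 else 0
  have hlast : (j : ℕ) + 1 = g.natDegree ↔ (j : ℕ) = n - 1 := by omega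
  simp only [companionMat, of_apply, hlast]

namespace Polynomial.Sequence

variable {F : Type*} [Field F]

noncomputable def adic (f : F[X]) (hf : 0 < f.natDegree) : Sequence F where
  elems' i := X ^ (i % f.natDegree) * f ^ (i / f.natDegree)
  degree_eq' i := by
    have hf0 : f ≠ 0 := ne_zero_of_natDegree_gt hf
    rw [degree_eq_natDegree (mul_ne_zero (pow_ne_zero _ X_ne_zero) (pow_ne_zero _ hf0)),
      natDegree_mul (pow_ne_zero _ X_ne_zero) (pow_ne_zero _ hf0), natDegree_X_pow, natDegree_pow,
      Nat.mod_add_div']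

theorem adic_apply (f : F[X]) (hf : 0 < f.natDegree) (i : ℕ) :
    adic f hf i = X ^ (i % f.natDegree) * f ^ (i / f.natDegree) := rfl

theorem adic_add_natDegree (f : F[X]) (hf : 0 < f.natDegree) (i : ℕ) :
    adic f hf (i + f.natDegree) = f * adic f hf i := by
  rw [adic_apply, adic_apply, Nat.add_mod_right, Nat.add_div_right _ hf, pow_succ]
  ring

theorem pow_dvd_mul_adic (f : F[X]) (hf : 0 < f.natDegree) {e i : ℕ}
    (hi : f.natDegree * e ≤ i + f.natDegree) : f ^ e ∣ f * adic f hf i := by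
  have he : e ≤ i / f.natDegree + 1 := by
    rw [← Nat.add_div_right _ hf]
    exact (Nat.le_div_iff_mul_le hf).2 (by rwa [mul_comm])
  rw [adic_apply, mul_left_comm, ← pow_succ']
  exact dvd_mul_of_dvd_right (pow_dvd_pow f he) _

theorem top_le_span_mk (S : Sequence F) {g : F[X]} (hg : g.Monic) :
    ⊤ ≤ Submodule.span F (Set.range fun i : Fin g.natDegree => AdjoinRoot.mk g (S i)) := by
  intro x _
  obtain ⟨q, rfl⟩ := AdjoinRoot.mk_surjective x
  have hcoeff : ∀ i < g.natDegree, IsUnit (S i).leadingCoeff :=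
    fun i _ => isUnit_iff_ne_zero.2 (leadingCoeff_ne_zero.2 (S.ne_zero i))
  have hrem : q %ₘ g ∈ Submodule.span F (S '' Set.Iio g.natDegree) := by
    rw [S.span_degreeLT hcoeff, mem_degreeLT, ← degree_eq_natDegree hg.ne_zero]
    exact degree_modByMonic_lt q hg
  have hmem := Submodule.mem_map_of_mem (f := (AdjoinRoot.mkₐ g).toLinearMap) hrem
  rw [Submodule.map_span, AlgHom.toLinearMap_apply, AdjoinRoot.coe_mkₐ,
    ← AdjoinRoot.modByMonicHom_mk hg, AdjoinRoot.mk_leftInverse hg] at hmem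
  refine Submodule.span_mono ?_ hmem
  rintro _ ⟨_, ⟨i, hi, rfl⟩, rfl⟩
  exact ⟨⟨i, hi⟩, rfl⟩

noncomputable def adjoinRootBasis (S : Sequence F) {g : F[X]} (hg : g.Monic) {n : ℕ}
    (hn : g.natDegree = n) : Module.Basis (Fin n) F (AdjoinRoot g) :=
  basisOfTopLeSpanOfCardEqFinrank (fun i : Fin n => AdjoinRoot.mk g (S i))
    (by subst hn; exact S.top_le_span_mk hg)
    (by rw [Fintype.card_fin, (AdjoinRoot.powerBasis' hg).finrank, AdjoinRoot.powerBasis'_dim, hn])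

theorem adjoinRootBasis_apply (S : Sequence F) {g : F[X]} (hg : g.Monic) {n : ℕ}
    (hn : g.natDegree = n) (i : Fin n) : S.adjoinRootBasis hg hn i = AdjoinRoot.mk g (S i) :=
  congrFun (coe_basisOfTopLeSpanOfCardEqFinrank _ _ _) i

end Polynomial.Sequence

open Polynomial.Sequence in
theorem AdjoinRoot.mk_mul_adjoinRootBasis_adic {F : Type*} [Field F] {f : F[X]}
    (hf : 0 < f.natDegree) {e : ℕ} (hg : (f ^ e).Monic) (hn : (f ^ e).natDegree = f.natDegree * e)
    (j : Fin (f.natDegree * e)) :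
    mk (f ^ e) f * (adic f hf).adjoinRootBasis hg hn j =
      if h : (j : ℕ) + f.natDegree < f.natDegree * e then
        (adic f hf).adjoinRootBasis hg hn ⟨j + f.natDegree, h⟩
      else 0 := by
  rw [adjoinRootBasis_apply, ← map_mul]
  split_ifs with h
  · rw [adjoinRootBasis_apply, adic_add_natDegree]
  · exact mk_eq_zero.2 (pow_dvd_mul_adic f hf (by omega))

theorem LinearMap.toMatrix_reindex_revPerm_eq_blockNilpotent {F M : Type*} [Field F]
    [AddCommGroup M] [Module F M] {d e : ℕ} (w : Module.Basis (Fin (d * e)) F M)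
    (φ : M →ₗ[F] M)
    (hφ : ∀ j, φ (w j) = if h : (j : ℕ) + d < d * e then w ⟨j + d, h⟩ else 0) :
    toMatrix (w.reindex Fin.revPerm) (w.reindex Fin.revPerm) φ = blockNilpotent F d e := by
  ext i a
  rw [toMatrix_apply, Module.Basis.reindex_apply, Module.Basis.repr_reindex_apply,
    Fin.revPerm_symm, Fin.revPerm_apply, hφ]
  simp only [blockNilpotent, of_apply]
  have hrev_a := Fin.val_rev a
  have hrev_i := Fin.val_rev i
  by_cases h : (a.rev : ℕ) + d < d * e
  · rw [dif_pos h, w.repr_self, Finsupp.single_apply]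
    refine if_congr ?_ rfl rfl
    rw [Fin.ext_iff, Fin.revPerm_apply, Fin.val_mk]
    omega
  · rw [dif_neg h, map_zero, Finsupp.zero_apply, if_neg (by omega)]

theorem Module.Basis.toMatrix_mul_leftMulMatrix {F A ι : Type*} [Field F] [Ring A]
    [Algebra F A] [Fintype ι] [DecidableEq ι] (b v : Module.Basis ι F A) (x : A) :
    v.toMatrix b * Algebra.leftMulMatrix b x = Algebra.leftMulMatrix v x * v.toMatrix b := by
  rw [Algebra.leftMulMatrix_apply, Algebra.leftMulMatrix_apply,
    basis_toMatrix_mul_linearMap_toMatrix, linearMap_toMatrix_mul_basis_toMatrix]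

open Polynomial.Sequence in
theorem eval_companion_similar_blockNilpotent_general {F : Type*} [Field F]
    (f : Polynomial F) (hf : Irreducible f) (hmonic : f.Monic)
    (d e : ℕ) (hd : d = f.natDegree)
    (C : Matrix (Fin (d * e)) (Fin (d * e)) F)
    (hC : C = companionMat (d * e) (f ^ e)) :
    (∃ P : Matrix (Fin (d * e)) (Fin (d * e)) F,
        IsUnit P ∧ P * (Polynomial.aeval C f) = blockNilpotent F d e * P) ∧
    (Polynomial.aeval C f) ^ e = 0 ∧
    minpoly F (Polynomial.aeval C f) = Polynomial.X ^ e := by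
  subst hd
  have hg : (f ^ e).Monic := hmonic.pow e
  have hn : (f ^ e).natDegree = f.natDegree * e := by rw [natDegree_pow, mul_comm]
  set b := (AdjoinRoot.powerBasis' hg).basis.reindex (finCongr hn)
  set w := (adic f hf.natDegree_pos).adjoinRootBasis hg hn
  set y := AdjoinRoot.mk (f ^ e) f
  have hfC : aeval C f = Algebra.leftMulMatrix b y := by
    rw [hC, companionMat_eq_leftMulMatrix hg hn, aeval_algHom_apply, AdjoinRoot.aeval_eq]
  have hN : Algebra.leftMulMatrix (w.reindex Fin.revPerm) y = blockNilpotent F f.natDegree e :=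
    LinearMap.toMatrix_reindex_revPerm_eq_blockNilpotent w _
      (AdjoinRoot.mk_mul_adjoinRootBasis_adic hf.natDegree_pos hg hn)
  have hmin : minpoly F (aeval C f) = X ^ e := by
    rw [hfC, minpoly.algHom_eq _ (Algebra.leftMulMatrix_injective b),
      minpoly_eq_X_pow_of_pow_eq_zero_iff (AdjoinRoot.mk_pow_pow_eq_zero_iff hf e)]
  refine ⟨⟨(w.reindex Fin.revPerm).toMatrix b, ?_, ?_⟩, ?_, hmin⟩
  · exact @isUnit_of_invertible _ _ _ (Module.Basis.invertibleToMatrix _ b)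
  · rw [hfC, ← hN, Module.Basis.toMatrix_mul_leftMulMatrix]
  · simpa [hmin] using minpoly.aeval F (aeval C f)

/-- `f(C_{f^e})` is similar over `F` to the block nilpotent matrix `N`;
in particular `f(C)^e = 0` and the minimal polynomial of `f(C)` is `X^e`. -/
theorem eval_companion_similar_blockNilpotent {F : Type*} [Field F]
    (f : Polynomial F) (hf : Irreducible f) (hmonic : f.Monic)
    (d e : ℕ) (hd : d = f.natDegree) (he : 1 ≤ e)
    (C : Matrix (Fin (d * e)) (Fin (d * e)) F)
    (hC : C = companionMat (d * e) (f ^ e)) :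
    (∃ P : Matrix (Fin (d * e)) (Fin (d * e)) F,
        IsUnit P ∧ P * (Polynomial.aeval C f) = blockNilpotent F d e * P) ∧
    (Polynomial.aeval C f) ^ e = 0 ∧
    minpoly F (Polynomial.aeval C f) = Polynomial.X ^ e :=
  eval_companion_similar_blockNilpotent_general f hf hmonic d e hd C hC
end
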